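/- Let Σ̂ be an n×n real symmetric positive definite matrix and suppose 0 < δ < δ_max(Σ̂) := log det( dd(Σ̂⁻¹)·Σ̂ ). Then the minimizer of F over C_F is unique: if (λ₁, X₁) ∈ C_F and (λ₂, X₂) ∈ C_F both satisfy F(λᵢ, Xᵢ) ≤ F(λ, X) for all (λ, X) ∈ C_F, then λ₁ = λ₂ and X₁ = X₂. -/

import Mathlib

/-!
`F(λ, X) = λ · g(Ŝ⁻¹ + λ⁻¹X)` is the perspective of `g(U) = -log det U - log det Ŝ + δ`, which is
strictly convex on positive definite matrices. Hence `F` is convex on the convex set `C_F`, and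
strictly so along any segment on which `U = Ŝ⁻¹ + λ⁻¹X` is not constant: two minimisers share
the same `U`, so `F(λᵢ, Xᵢ) = -λᵢ K` for one constant `K`. The hypothesis `δ < δ_max` yields a
feasible point with `F < 0`, so the minimum is negative, `K > 0`, and `λ₁ = λ₂`, `X₁ = X₂`.
-/

/-- `dd M`: the diagonal matrix with the same diagonal as `M`. -/
def dd {n : ℕ} (M : Matrix (Fin n) (Fin n) ℝ) : Matrix (Fin n) (Fin n) ℝ :=
  Matrix.diagonal fun i => M i i

/-- `F(λ,X) := −λ(log det(Ŝ⁻¹ + λ⁻¹X) + log det Ŝ − δ)`. -/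
noncomputable def Fobj {n : ℕ} (S : Matrix (Fin n) (Fin n) ℝ) (δ : ℝ)
    (l : ℝ) (X : Matrix (Fin n) (Fin n) ℝ) : ℝ :=
  -(l * (Real.log ((S⁻¹ + l⁻¹ • X).det) + Real.log S.det - δ))

/-- The constraint set `C_F`: `λ > 0`, `X` symmetric, `X ⪯ I`, `dd(X) ⪯ 0`,
`Ŝ⁻¹ + λ⁻¹X ≻ 0`. -/
def CF {n : ℕ} (S : Matrix (Fin n) (Fin n) ℝ)
    (l : ℝ) (X : Matrix (Fin n) (Fin n) ℝ) : Prop :=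
  0 < l ∧ X.IsSymm ∧ (1 - X).PosSemidef ∧ (-(dd X)).PosSemidef ∧
    (S⁻¹ + l⁻¹ • X).PosDef

open Matrix Real

namespace Real

theorem mul_log_le_log_add_mul {a b μ : ℝ} (ha : 0 < a) (hb : 0 < b) (hab : a + b = 1)
    (hμ : 0 < μ) : b * log μ ≤ log (a + b * μ) := by
  simpa using strictConcaveOn_log_Ioi.concaveOn.2 (Set.mem_Ioi.2 one_pos) hμ ha.le hb.le hab

theorem mul_log_lt_log_add_mul {a b μ : ℝ} (ha : 0 < a) (hb : 0 < b) (hab : a + b = 1)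
    (hμ : 0 < μ) (hμ1 : μ ≠ 1) : b * log μ < log (a + b * μ) := by
  simpa using strictConcaveOn_log_Ioi.2 (Set.mem_Ioi.2 one_pos) hμ hμ1.symm ha hb hab

end Real

namespace Matrix

theorem convex_setOf_posDef {m : Type*} : Convex ℝ {A : Matrix m m ℝ | A.PosDef} :=
  convex_iff_forall_pos.2 fun _ hA _ hB _ _ ha hb _ => (hA.smul ha).add (hB.smul hb)

variable {m : Type*} [Fintype m] [DecidableEq m]

theorem IsHermitian.det_smul_one_add_smul {A : Matrix m m ℝ} (hA : A.IsHermitian) (s t : ℝ) :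
    (s • 1 + t • A).det = ∏ i, (s + t * hA.eigenvalues i) := by
  conv_lhs =>
    rw [hA.spectral_theorem,
      ← map_one (Unitary.conjStarAlgAut ℝ (Matrix m m ℝ) hA.eigenvectorUnitary),
      ← map_smul, ← map_smul, ← map_add, det_map', ← diagonal_one, ← diagonal_smul,
      ← diagonal_smul, diagonal_add, det_diagonal]
  simp

theorem IsHermitian.eq_one_of_eigenvalues_eq_one {A : Matrix m m ℝ} (hA : A.IsHermitian)
    (h : ∀ i, hA.eigenvalues i = 1) : A = 1 :=
  CFC.eq_one_of_spectrum_subset_one A <| by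
    rw [hA.spectrum_real_eq_range_eigenvalues]
    rintro _ ⟨i, rfl⟩
    exact h i

theorem PosDef.mul_log_det_lt_log_det_smul_one_add_smul {M : Matrix m m ℝ} (hM : M.PosDef)
    (hM1 : M ≠ 1) {a b : ℝ} (ha : 0 < a) (hb : 0 < b) (hab : a + b = 1) :
    b * log M.det < log (a • 1 + b • M).det := by
  obtain ⟨i, hi⟩ : ∃ i, hM.1.eigenvalues i ≠ 1 := by
    by_contra! h
    exact hM1 (hM.1.eq_one_of_eigenvalues_eq_one h)
  have hμ := hM.eigenvalues_pos
  rw [hM.1.det_smul_one_add_smul, hM.1.det_eq_prod_eigenvalues,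
    log_prod fun j _ => (add_pos ha (mul_pos hb (hμ j))).ne']
  simp only [RCLike.ofReal_real_eq_id, id]
  rw [log_prod fun j _ => (hμ j).ne', Finset.mul_sum]
  exact Finset.sum_lt_sum (fun j _ => mul_log_le_log_add_mul ha hb hab (hμ j))
    ⟨i, Finset.mem_univ i, mul_log_lt_log_add_mul ha hb hab (hμ i) hi⟩

open scoped MatrixOrder in
/-- Conjugating by `C = √A` reduces the claim to the pair `1`, `M = C⁻¹ B C⁻¹`. -/
theorem strictConcaveOn_log_det :
    StrictConcaveOn ℝ {A : Matrix m m ℝ | A.PosDef} (fun A => log A.det) := by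
  refine ⟨convex_setOf_posDef, fun A (hA : A.PosDef) B (hB : B.PosDef) hAB a b ha hb hab => ?_⟩
  set C := CFC.sqrt A
  have hC : C.PosDef :=
    isStrictlyPositive_iff_posDef.mp (isStrictlyPositive_iff_posDef.mpr hA).sqrt
  have hCC : C * C = A := CFC.sqrt_mul_sqrt_self A hA.posSemidef.nonneg
  have hCu : IsUnit C.det := hC.det_pos.ne'.isUnit
  set M := C⁻¹ * B * C⁻¹
  have hM : M.PosDef := by
    have hinj : Function.Injective C⁻¹.mulVec :=
      mulVec_injective_iff_isUnit.2 ((isUnit_iff_isUnit_det _).2 (isUnit_nonsing_inv_det _ hCu))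
    simpa only [hC.inv.1.eq] using hB.conjTranspose_mul_mul_same hinj
  have hCMC : C * M * C = B := by
    simp only [M, ← mul_assoc, mul_nonsing_inv _ hCu, one_mul]
    rw [mul_assoc, nonsing_inv_mul _ hCu, mul_one]
  have hM1 : M ≠ 1 := fun h => hAB (by rw [← hCMC, h, mul_one, hCC])
  have hmix : a • A + b • B = C * (a • 1 + b • M) * C := by
    rw [← hCC, ← hCMC]
    noncomm_ring
  have hlog_conj : ∀ N : Matrix m m ℝ, N.PosDef → log (C * N * C).det = log N.det + log A.det := by
    intro N hN
    have : (C * N * C).det = N.det * A.det := by rw [← hCC, det_mul, det_mul, det_mul]; ring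
    rw [this, log_mul hN.det_pos.ne' hA.det_pos.ne']
  have hlt := hM.mul_log_det_lt_log_det_smul_one_add_smul hM1 ha hb hab
  have hA' : a * log A.det + b * log A.det = log A.det := by rw [← add_mul, hab, one_mul]
  simp only [smul_eq_mul]
  rw [hmix, hlog_conj _ ((PosDef.one.smul ha).add (hM.smul hb)), ← hCMC, hlog_conj _ hM]
  linarith

end Matrix

section Perspective

variable {E : Type*} [AddCommGroup E] [Module ℝ E]

theorem add_inv_smul_add_smul_eq (P X₁ X₂ : E) {l₁ l₂ a b : ℝ} (hl₁ : l₁ ≠ 0) (hl₂ : l₂ ≠ 0)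
    (hl : a * l₁ + b * l₂ ≠ 0) :
    P + (a * l₁ + b * l₂)⁻¹ • (a • X₁ + b • X₂) =
      (a * l₁ / (a * l₁ + b * l₂)) • (P + l₁⁻¹ • X₁) +
        (b * l₂ / (a * l₁ + b * l₂)) • (P + l₂⁻¹ • X₂) := by
  match_scalars <;> field_simp

theorem StrictConcaveOn.lt_perspective {s : Set E} {f : E → ℝ} (hf : StrictConcaveOn ℝ s f)
    {P X₁ X₂ : E} {l₁ l₂ a b : ℝ} (hl₁ : 0 < l₁) (hl₂ : 0 < l₂)
    (h₁ : P + l₁⁻¹ • X₁ ∈ s) (h₂ : P + l₂⁻¹ • X₂ ∈ s) (hne : P + l₁⁻¹ • X₁ ≠ P + l₂⁻¹ • X₂)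
    (ha : 0 < a) (hb : 0 < b) :
    a * (l₁ * f (P + l₁⁻¹ • X₁)) + b * (l₂ * f (P + l₂⁻¹ • X₂)) <
      (a * l₁ + b * l₂) * f (P + (a * l₁ + b * l₂)⁻¹ • (a • X₁ + b • X₂)) := by
  set l := a * l₁ + b * l₂
  have hl : 0 < l := by positivity
  have key := hf.2 h₁ h₂ hne (div_pos (mul_pos ha hl₁) hl) (div_pos (mul_pos hb hl₂) hl)
    (by rw [← add_div, div_self hl.ne'])
  rw [← add_inv_smul_add_smul_eq P X₁ X₂ hl₁.ne' hl₂.ne' hl.ne', smul_eq_mul, smul_eq_mul] at key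
  calc a * (l₁ * f (P + l₁⁻¹ • X₁)) + b * (l₂ * f (P + l₂⁻¹ • X₂))
      = l * (a * l₁ / l * f (P + l₁⁻¹ • X₁) + b * l₂ / l * f (P + l₂⁻¹ • X₂)) := by
        field_simp
    _ < l * f (P + l⁻¹ • (a • X₁ + b • X₂)) := mul_lt_mul_of_pos_left key hl

end Perspective

section Objective

variable {n : ℕ} {S : Matrix (Fin n) (Fin n) ℝ}

theorem convex_setOf_CF : Convex ℝ {p : ℝ × Matrix (Fin n) (Fin n) ℝ | CF S p.1 p.2} := by
  refine convex_iff_forall_pos.2 ?_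
  rintro ⟨l₁, X₁⟩ ⟨hl₁, hs₁, hI₁, hd₁, hU₁⟩ ⟨l₂, X₂⟩ ⟨hl₂, hs₂, hI₂, hd₂, hU₂⟩ a b ha hb hab
  show CF S (a * l₁ + b * l₂) (a • X₁ + b • X₂)
  refine ⟨by positivity, (hs₁.smul a).add (hs₂.smul b), ?_, ?_, ?_⟩
  · have : 1 - (a • X₁ + b • X₂) = a • (1 - X₁) + b • (1 - X₂) := by
      linear_combination (norm := module) hab.symm • (1 : Matrix (Fin n) (Fin n) ℝ)
    rw [this]
    exact (hI₁.smul ha.le).add (hI₂.smul hb.le)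
  · have : -dd (a • X₁ + b • X₂) = a • -dd X₁ + b • -dd X₂ := by
      ext i j
      by_cases h : i = j <;> simp [dd, h, add_comm]
    rw [this]
    exact (hd₁.smul ha.le).add (hd₂.smul hb.le)
  · rw [add_inv_smul_add_smul_eq _ _ _ hl₁.ne' hl₂.ne' (by positivity)]
    refine convex_setOf_posDef hU₁ hU₂ (by positivity) (by positivity) ?_
    field_simp

theorem Fobj_convex_combination_lt {δ l₁ l₂ a b : ℝ} {X₁ X₂ : Matrix (Fin n) (Fin n) ℝ}
    (h₁ : CF S l₁ X₁) (h₂ : CF S l₂ X₂) (hne : S⁻¹ + l₁⁻¹ • X₁ ≠ S⁻¹ + l₂⁻¹ • X₂)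
    (ha : 0 < a) (hb : 0 < b) :
    Fobj S δ (a * l₁ + b * l₂) (a • X₁ + b • X₂) < a * Fobj S δ l₁ X₁ + b * Fobj S δ l₂ X₂ := by
  have := strictConcaveOn_log_det.lt_perspective h₁.1 h₂.1 h₁.2.2.2.2 h₂.2.2.2.2 hne ha hb
  simp only [Fobj]
  linarith

theorem eq_of_Fobj_eq_of_neg {δ l₁ l₂ : ℝ} {X₁ X₂ : Matrix (Fin n) (Fin n) ℝ} (hl₁ : 0 < l₁)
    (hU : S⁻¹ + l₁⁻¹ • X₁ = S⁻¹ + l₂⁻¹ • X₂) (hF : Fobj S δ l₁ X₁ = Fobj S δ l₂ X₂)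
    (hneg : Fobj S δ l₁ X₁ < 0) : l₁ = l₂ ∧ X₁ = X₂ := by
  set K := log (S⁻¹ + l₁⁻¹ • X₁).det + log S.det - δ
  have hK : 0 < K := by
    have : 0 < l₁ * K := by simpa [Fobj] using hneg
    exact pos_of_mul_pos_right this hl₁.le
  have hl : l₁ = l₂ := by
    have : l₁ * K = l₂ * K := by simpa [Fobj, K, hU] using hF
    exact mul_right_cancel₀ hK.ne' this
  subst hl
  exact ⟨rfl, smul_right_injective _ (inv_ne_zero hl₁.ne') (add_left_cancel hU)⟩

/-- The witness is `X = λ (dd Ŝ⁻¹ - Ŝ⁻¹)`, for which `Ŝ⁻¹ + λ⁻¹X = dd Ŝ⁻¹` and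
`F = -λ (δ_max - δ)`; taking `λ ≤ 1 / (1 + tr Ŝ⁻¹)` keeps `X ⪯ I`. -/
theorem exists_CF_Fobj_neg (hS : S.PosDef) {δ : ℝ} (hδ : δ < log (dd S⁻¹ * S).det) :
    ∃ l X, CF S l X ∧ Fobj S δ l X < 0 := by
  have hSi : S⁻¹.PosDef := hS.inv
  have htr : 0 ≤ S⁻¹.trace := hSi.posSemidef.trace_nonneg
  set l := (1 + S⁻¹.trace)⁻¹
  have hl : 0 < l := inv_pos.2 (by linarith)
  have hld : ∀ i, 0 ≤ 1 - l * S⁻¹ i i := fun i => by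
    rw [sub_nonneg, inv_mul_le_one₀ (by linarith)]
    have : S⁻¹ i i ≤ S⁻¹.trace :=
      Finset.single_le_sum (f := fun j => S⁻¹ j j) (fun j _ => hSi.diag_pos.le)
        (Finset.mem_univ i)
    linarith
  have hdd : (dd S⁻¹).PosDef := PosDef.diagonal fun i => hSi.diag_pos
  have hU : S⁻¹ + l⁻¹ • (l • (dd S⁻¹ - S⁻¹)) = dd S⁻¹ := by
    rw [smul_smul, inv_mul_cancel₀ hl.ne', one_smul, add_sub_cancel]
  refine ⟨l, l • (dd S⁻¹ - S⁻¹), ⟨hl, ?_, ?_, ?_, by rwa [hU]⟩, ?_⟩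
  · exact ((isSymm_diagonal _).sub (isHermitian_iff_isSymm.mp hSi.1)).smul l
  · have : 1 - l • (dd S⁻¹ - S⁻¹) = diagonal (fun i => 1 - l * S⁻¹ i i) + l • S⁻¹ := by
      ext i j
      by_cases h : i = j <;> simp [dd, h, one_apply]
    rw [this]
    exact (PosSemidef.diagonal hld).add (hSi.posSemidef.smul hl.le)
  · have : dd (l • (dd S⁻¹ - S⁻¹)) = 0 := by
      ext i j
      by_cases h : i = j <;> simp [dd, h]
    simpa [this] using PosSemidef.zero
  · have hlog : log (dd S⁻¹).det + log S.det = log (dd S⁻¹ * S).det := by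
      rw [det_mul, log_mul hdd.det_pos.ne' hS.det_pos.ne']
    simp only [Fobj, hU]
    nlinarith

end Objective

theorem stmt17_general {n : ℕ} (S : Matrix (Fin n) (Fin n) ℝ) (hS : S.PosDef)
    (δ : ℝ) (hδmax : δ < Real.log ((dd S⁻¹ * S).det))
    (l₁ l₂ : ℝ) (X₁ X₂ : Matrix (Fin n) (Fin n) ℝ)
    (h₁ : CF S l₁ X₁) (h₂ : CF S l₂ X₂)
    (hmin₁ : ∀ l X, CF S l X → Fobj S δ l₁ X₁ ≤ Fobj S δ l X)
    (hmin₂ : ∀ l X, CF S l X → Fobj S δ l₂ X₂ ≤ Fobj S δ l X) :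
    l₁ = l₂ ∧ X₁ = X₂ := by
  have hF : Fobj S δ l₁ X₁ = Fobj S δ l₂ X₂ := le_antisymm (hmin₁ _ _ h₂) (hmin₂ _ _ h₁)
  obtain ⟨l₀, X₀, h₀, hneg⟩ := exists_CF_Fobj_neg hS hδmax
  refine eq_of_Fobj_eq_of_neg h₁.1 ?_ hF ((hmin₁ _ _ h₀).trans_lt hneg)
  by_contra hne
  have hmid : Fobj S δ l₁ X₁ ≤ Fobj S δ (2⁻¹ * l₁ + 2⁻¹ * l₂) ((2⁻¹ : ℝ) • X₁ + (2⁻¹ : ℝ) • X₂) :=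
    hmin₁ _ _ (convex_setOf_CF (show (l₁, X₁) ∈ _ from h₁) (show (l₂, X₂) ∈ _ from h₂)
      (by norm_num) (by norm_num) (by norm_num))
  have hlt := Fobj_convex_combination_lt (δ := δ) h₁ h₂ hne (by norm_num : (0 : ℝ) < 2⁻¹)
    (by norm_num : (0 : ℝ) < 2⁻¹)
  linarith

/-- For `Ŝ ≻ 0` and `0 < δ < δ_max(Ŝ) := log det(dd(Ŝ⁻¹)Ŝ)`, the
minimizer of `F` over `C_F` is unique. -/
theorem stmt17 {n : ℕ} (S : Matrix (Fin n) (Fin n) ℝ) (hS : S.PosDef)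
    (δ : ℝ) (hδ : 0 < δ) (hδmax : δ < Real.log ((dd S⁻¹ * S).det))
    (l₁ l₂ : ℝ) (X₁ X₂ : Matrix (Fin n) (Fin n) ℝ)
    (h₁ : CF S l₁ X₁) (h₂ : CF S l₂ X₂)
    (hmin₁ : ∀ l X, CF S l X → Fobj S δ l₁ X₁ ≤ Fobj S δ l X)
    (hmin₂ : ∀ l X, CF S l X → Fobj S δ l₂ X₂ ≤ Fobj S δ l X) :
    l₁ = l₂ ∧ X₁ = X₂ :=
  stmt17_general S hS δ hδmax l₁ l₂ X₁ X₂ h₁ h₂ hmin₁ hmin₂
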